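/- Let H = (V, E) be a connected finite simple graph on at least two vertices with maximum degree Δ that is not regular (i.e., some vertex has degree strictly less than Δ), and let φ_H be the ℓ2-normalized eigenvector of the adjacency matrix A_H corresponding to its largest eigenvalue λ1(A_H), chosen with strictly positive entries. Then there exists a vertex u ∈ V with deg(u) < Δ such that φ_H(u) ≥ 1/(Δ^2 · λ1(A_H) · |V|^{5/2}). -/
import Mathlib

open Matrix Finset

namespace SimpleGraph.Walk

variable {V : Type*} {G : SimpleGraph V}

lemma getVert_mem_support' {u v : V} (p : G.Walk u v) (i : ℕ) :
    p.getVert i ∈ p.support := by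
  induction p generalizing i with
  | nil => simp [getVert]
  | cons h q ih =>
    cases i with
    | zero => simp [getVert_zero]
    | succ n =>
      rw [getVert_cons_succ]
      simp only [support_cons, List.mem_cons]
      exact Or.inr (ih n)

lemma IsPath.getVert_injOn' {u v : V} {p : G.Walk u v} (hp : p.IsPath) :
    ∀ i ≤ p.length, ∀ j ≤ p.length, p.getVert i = p.getVert j → i = j := by
  induction p with
  | nil => intro i hi j hj _; simp only [SimpleGraph.Walk.length_nil, Nat.le_zero] at hi hj; omega
  | cons h q ih =>
    rw [SimpleGraph.Walk.cons_isPath_iff] at hp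
    intro i hi j hj hij
    match i, j with
    | 0, 0 => rfl
    | 0, (j+1) =>
      exfalso
      rw [getVert_zero, getVert_cons_succ] at hij
      exact hp.2 (hij ▸ q.getVert_mem_support' j)
    | (i+1), 0 =>
      exfalso
      rw [getVert_zero, getVert_cons_succ] at hij
      exact hp.2 (hij ▸ q.getVert_mem_support' i)
    | (i+1), (j+1) =>
      simp only [length_cons, Nat.add_le_add_iff_right] at hi hj
      rw [getVert_cons_succ, getVert_cons_succ] at hij
      exact congrArg Nat.succ (ih hp.1 i hi j hj hij)

end SimpleGraph.Walk

set_option maxHeartbeats 1000000 in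
theorem stmt_4 {V : Type*} [Fintype V] [DecidableEq V] (H : SimpleGraph V)
    [DecidableRel H.Adj] (hconn : H.Connected) (hcard : 2 ≤ Fintype.card V)
    (Δ : ℕ) (hdeg : ∀ v, H.degree v ≤ Δ) (hmax : ∃ v, H.degree v = Δ)
    (hirr : ∃ v, H.degree v < Δ)
    (φ : V → ℝ) (hpos : ∀ v, 0 < φ v) (hnorm : ∑ v, φ v ^ 2 = 1) (μ : ℝ)
    (heig : (H.adjMatrix ℝ).mulVec φ = μ • φ) :
    ∃ u : V, H.degree u < Δ ∧
      1 / ((Δ : ℝ)^2 * μ * (Fintype.card V : ℝ) ^ ((5 : ℝ)/2)) ≤ φ u := by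
  classical
  set n : ℝ := (Fintype.card V : ℝ) with hn_def
  clear_value n
  have hn2 : (2:ℝ) ≤ n := by rw [hn_def]; exact_mod_cast hcard
  have hn0 : (0:ℝ) < n := by linarith
  -- eigen equation pointwise
  have hAp : ∀ v, ∑ x ∈ H.neighborFinset v, φ x = μ * φ v := by
    intro v
    have := congrFun heig v
    simpa using this
  -- degrees are positive
  have hdegpos : ∀ v, 0 < H.degree v := by
    intro v
    obtain ⟨u, hu⟩ := Fintype.exists_ne_of_one_lt_card (by omega) v
    obtain ⟨q⟩ := hconn.preconnected v u
    have hql : 0 < q.length := by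
      rcases Nat.eq_zero_or_pos q.length with h0 | h
      · exfalso
        have := q.getVert_of_length_le (Nat.le_of_eq h0)
        rw [q.getVert_zero] at this
        exact hu this.symm
      · exact h
    rw [H.degree_pos_iff_exists_adj]
    exact ⟨q.getVert 1, by simpa [q.getVert_zero] using q.adj_getVert_succ hql⟩
  -- Δ ≥ 2
  have hΔ2 : 2 ≤ Δ := by
    obtain ⟨v, hv⟩ := hirr
    have := hdegpos v
    omega
  have hΔ0 : (0:ℝ) < (Δ:ℝ) := by positivity
  -- sum swap lemma
  have hswap : ∀ g : V → ℝ, ∑ v, ∑ x ∈ H.neighborFinset v, g x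
      = ∑ x, (H.degree x : ℝ) * g x := by
    intro g
    rw [Finset.sum_comm' (s := Finset.univ) (t := fun v => H.neighborFinset v)
      (t' := Finset.univ) (s' := fun x => H.neighborFinset x)
      (by intro x y
          simp only [Finset.mem_univ, true_and, SimpleGraph.mem_neighborFinset, and_true]
          exact H.adj_comm x y)]
    refine Finset.sum_congr rfl (fun x _ => ?_)
    rw [Finset.sum_const, SimpleGraph.degree, nsmul_eq_mul]
  -- sum of φ is positive
  have : Nonempty V := Fintype.card_pos_iff.mp (by omega)
  have hsφ : 0 < ∑ v, φ v :=
    Finset.sum_pos (fun v _ => hpos v) Finset.univ_nonempty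
  -- ∑ deg v * φ v = μ * ∑ φ
  have hdegsum : ∑ v, (H.degree v : ℝ) * φ v = μ * ∑ v, φ v := by
    rw [← hswap φ]
    rw [Finset.mul_sum]
    exact Finset.sum_congr rfl (fun v _ => hAp v)
  -- μ ≥ 1
  have hmu1 : 1 ≤ μ := by
    have h1 : ∑ v, φ v ≤ ∑ v, (H.degree v : ℝ) * φ v := by
      apply Finset.sum_le_sum
      intro v _
      have : (1:ℝ) ≤ (H.degree v : ℝ) := by exact_mod_cast hdegpos v
      nlinarith [hpos v]
    rw [hdegsum] at h1
    nlinarith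
  have hmu0 : 0 < μ := by linarith
  -- μ² ≥ Δ
  have hmu2 : (Δ:ℝ) ≤ μ^2 := by
    obtain ⟨v₀, hv₀⟩ := hmax
    have h1 : (Δ:ℝ) * φ v₀ ≤ μ^2 * φ v₀ := by
      have h2 : ∀ x ∈ H.neighborFinset v₀, φ v₀ ≤ ∑ y ∈ H.neighborFinset x, φ y := by
        intro x hx
        apply Finset.single_le_sum (f := φ) (fun y _ => (hpos y).le)
        rw [SimpleGraph.mem_neighborFinset] at hx ⊢
        exact hx.symm
      calc (Δ:ℝ) * φ v₀ = ∑ _x ∈ H.neighborFinset v₀, φ v₀ := by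
            rw [Finset.sum_const, nsmul_eq_mul]
            rw [show (H.neighborFinset v₀).card = H.degree v₀ from rfl, hv₀]
        _ ≤ ∑ x ∈ H.neighborFinset v₀, ∑ y ∈ H.neighborFinset x, φ y :=
            Finset.sum_le_sum h2
        _ = ∑ x ∈ H.neighborFinset v₀, μ * φ x :=
            Finset.sum_congr rfl (fun x _ => hAp x)
        _ = μ * (μ * φ v₀) := by rw [← Finset.mul_sum, hAp v₀]
        _ = μ^2 * φ v₀ := by ring
    nlinarith [hpos v₀]
  -- key identity
  have hkey : ∑ v, ((Δ:ℝ) - (H.degree v : ℝ)) * φ v = ((Δ:ℝ) - μ) * ∑ v, φ v := by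
    have : ∑ v, ((Δ:ℝ) - (H.degree v : ℝ)) * φ v
        = (Δ:ℝ) * ∑ v, φ v - ∑ v, (H.degree v : ℝ) * φ v := by
      rw [Finset.mul_sum, ← Finset.sum_sub_distrib]
      exact Finset.sum_congr rfl (fun v _ => by ring)
    rw [this, hdegsum]; ring
  -- δ > 0
  set δ : ℝ := (Δ:ℝ) - μ with hδ_def
  clear_value δ
  have hδpos : 0 < δ := by
    obtain ⟨v₁, hv₁⟩ := hirr
    have h1 : 0 < ∑ v, ((Δ:ℝ) - (H.degree v : ℝ)) * φ v := by
      apply Finset.sum_pos' (fun v _ => by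
        have : (H.degree v : ℝ) ≤ (Δ:ℝ) := by exact_mod_cast hdeg v
        nlinarith [hpos v])
      refine ⟨v₁, Finset.mem_univ _, ?_⟩
      have : (H.degree v₁ : ℝ) + 1 ≤ (Δ:ℝ) := by exact_mod_cast hv₁
      nlinarith [hpos v₁]
    rw [hkey] at h1
    nlinarith
  -- max vertex
  obtain ⟨w, -, hw⟩ := Finset.exists_max_image Finset.univ φ Finset.univ_nonempty
  set M : ℝ := φ w with hM_def
  clear_value M
  have hMpos : 0 < M := hM_def ▸ hpos w
  have hwmax : ∀ v, φ v ≤ M := fun v => hw v (Finset.mem_univ v)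
  have hM1 : 1 ≤ n * M^2 := by
    have h1 : ∑ v, φ v ^ 2 ≤ ∑ _v : V, M^2 := by
      apply Finset.sum_le_sum
      intro v _
      nlinarith [hwmax v, hpos v]
    rw [hnorm, Finset.sum_const, nsmul_eq_mul, Finset.card_univ] at h1
    rw [hn_def]
    exact h1
  have hMsum : 1 ≤ M * ∑ v, φ v := by
    have h1 : ∑ v, φ v ^ 2 ≤ ∑ v, M * φ v := by
      apply Finset.sum_le_sum
      intro v _
      nlinarith [hwmax v, hpos v]
    rw [hnorm, ← Finset.mul_sum] at h1
    exact h1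
  -- sqrt
  set s : ℝ := Real.sqrt n with hs_def
  clear_value s
  have hs0 : 0 < s := hs_def ▸ Real.sqrt_pos.mpr hn0
  have hssq : s ^ 2 = n := hs_def ▸ Real.sq_sqrt hn0.le
  have hsM : 1 ≤ s * M := by nlinarith [mul_pos hs0 hMpos]
  have hrpow : n ^ ((5:ℝ)/2) = n^2 * s := by
    have h1 : n ^ ((5:ℝ)/2) = n ^ (2:ℝ) * n ^ ((1:ℝ)/2) := by
      rw [← Real.rpow_add hn0]; norm_num
    have h2 : n ^ (2:ℝ) = n ^ (2:ℕ) := by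
      rw [← Real.rpow_natCast n 2]; norm_num
    rw [h1, h2, hs_def, Real.sqrt_eq_rpow]
  -- energy bound
  set D : ℝ := ∑ v, ∑ x ∈ H.neighborFinset v, (φ v - φ x)^2 with hD_def
  clear_value D
  have hDnn : 0 ≤ D := by
    rw [hD_def]
    exact Finset.sum_nonneg fun v _ => Finset.sum_nonneg fun x _ => sq_nonneg _
  have hD : D ≤ 2 * δ := by
    have inner : ∀ v, ∑ x ∈ H.neighborFinset v, (φ v - φ x)^2
        = (H.degree v : ℝ) * φ v^2 - 2*(μ*φ v^2) + ∑ x ∈ H.neighborFinset v, φ x^2 := by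
      intro v
      have e1 : ∑ x ∈ H.neighborFinset v, (φ v - φ x)^2
          = ∑ x ∈ H.neighborFinset v, (φ v^2 - 2*(φ v * φ x) + φ x^2) :=
        Finset.sum_congr rfl (fun x _ => by ring)
      rw [e1, Finset.sum_add_distrib, Finset.sum_sub_distrib, Finset.sum_const, nsmul_eq_mul,
        ← Finset.mul_sum, ← Finset.mul_sum, hAp v]
      have : (H.neighborFinset v).card = H.degree v := rfl
      rw [this]
      ring
    have e2 : D = ∑ v, ((H.degree v : ℝ) * φ v^2) - 2*μ
        + ∑ v, ∑ x ∈ H.neighborFinset v, φ x^2 := by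
      have hs2 : ∑ v, 2*(μ*φ v^2) = 2*μ := by
        have h5 : ∑ v, 2*(μ*φ v^2) = (2*μ) * ∑ v, φ v^2 := by
          rw [Finset.mul_sum]
          exact Finset.sum_congr rfl fun v _ => by ring
        rw [h5, hnorm, mul_one]
      rw [hD_def, Finset.sum_congr rfl (fun v _ => inner v), Finset.sum_add_distrib,
        Finset.sum_sub_distrib, hs2]
    rw [e2, hswap (fun x => φ x ^2)]
    have e3 : ∑ v, (H.degree v:ℝ) * φ v^2 ≤ (Δ:ℝ) := by
      calc ∑ v, (H.degree v:ℝ) * φ v^2 ≤ ∑ v, (Δ:ℝ) * φ v^2 := by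
            apply Finset.sum_le_sum
            intro v _
            have h4 : (H.degree v:ℝ) ≤ (Δ:ℝ) := by exact_mod_cast hdeg v
            nlinarith [sq_nonneg (φ v)]
        _ = (Δ:ℝ) := by rw [← Finset.mul_sum, hnorm, mul_one]
    rw [hδ_def]
    linarith
  -- low degree vertex and path from max vertex
  obtain ⟨u₁, hu₁⟩ := hirr
  obtain ⟨q0⟩ := hconn.preconnected w u₁
  set p : H.Walk w u₁ := q0.toPath.1 with hp_def
  have hp : p.IsPath := by rw [hp_def]; exact q0.toPath.2
  clear_value p
  set L : ℕ := p.length with hL_def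
  clear_value L
  have hLn : (L:ℝ) ≤ n := by
    have h9 := hp.length_lt
    rw [hn_def, hL_def]
    exact_mod_cast h9.le
  have htel : M - φ u₁ = ∑ i ∈ Finset.range L, (φ (p.getVert i) - φ (p.getVert (i+1))) := by
    rw [Finset.sum_range_sub' (fun i => φ (p.getVert i)) L]
    rw [p.getVert_zero, hL_def, p.getVert_length, hM_def]
  have hCS : (M - φ u₁)^2 ≤ (L:ℝ) * ∑ i ∈ Finset.range L, (φ (p.getVert i) - φ (p.getVert (i+1)))^2 := by
    rw [htel]
    have := sq_sum_le_card_mul_sum_sq (s := Finset.range L)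
      (f := fun i => φ (p.getVert i) - φ (p.getVert (i+1)))
    simpa using this
  have hsteps : ∑ i ∈ Finset.range L, (φ (p.getVert i) - φ (p.getVert (i+1)))^2 ≤ D := by
    have hDsig : D = ∑ q ∈ Finset.univ.sigma (fun v => H.neighborFinset v), (φ q.1 - φ q.2)^2 := by
      rw [hD_def, Finset.sum_sigma]
    rw [hDsig]
    have hinj : ∀ i ∈ Finset.range L, ∀ j ∈ Finset.range L,
        (fun i => (⟨p.getVert i, p.getVert (i+1)⟩ : (_ : V) × V)) i
        = (fun i => (⟨p.getVert i, p.getVert (i+1)⟩ : (_ : V) × V)) j → i = j := by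
      intro i hi j hj hij
      rw [Finset.mem_range] at hi hj
      have h1 : p.getVert i = p.getVert j := congrArg Sigma.fst hij
      exact hp.getVert_injOn' i (hL_def ▸ hi.le) j (hL_def ▸ hj.le) h1
    have himg : ∑ q ∈ (Finset.range L).image
          (fun i => (⟨p.getVert i, p.getVert (i+1)⟩ : (_ : V) × V)),
          (φ q.1 - φ q.2)^2
        = ∑ i ∈ Finset.range L, (φ (p.getVert i) - φ (p.getVert (i+1)))^2 :=
      Finset.sum_image hinj
    rw [← himg]
    apply Finset.sum_le_sum_of_subset_of_nonneg
    · intro q hq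
      rw [Finset.mem_image] at hq
      obtain ⟨i, hi, rfl⟩ := hq
      rw [Finset.mem_range] at hi
      rw [Finset.mem_sigma]
      exact ⟨Finset.mem_univ _, (SimpleGraph.mem_neighborFinset _ _ _).mpr (p.adj_getVert_succ (hL_def ▸ hi))⟩
    · intro q _ _
      positivity
  have hpath : (M - φ u₁)^2 ≤ n * (2*δ) := by
    calc (M - φ u₁)^2 ≤ (L:ℝ) * ∑ i ∈ Finset.range L, (φ (p.getVert i) - φ (p.getVert (i+1)))^2 := hCS
      _ ≤ n * D := by
          apply mul_le_mul hLn (hsteps) (Finset.sum_nonneg (fun i _ => sq_nonneg _)) hn0.le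
      _ ≤ n * (2*δ) := by nlinarith [hD, hn0, hDnn]
  have hcardn : ∀ T : Finset V, (T.card : ℝ) ≤ n := by
    intro T
    rw [hn_def]
    exact_mod_cast Finset.card_le_card (Finset.subset_univ T)
  -- clear the heavy hypotheses
  clear htel hCS hsteps hp hLn heig hAp hswap hdegsum hD hDnn hnorm hM1 hssq
  clear hL_def L hp_def p q0 hdegpos hw hn_def hM_def hs_def hD_def
  -- useful numeric facts
  have hΔ2r : (2:ℝ) ≤ (Δ:ℝ) := by exact_mod_cast hΔ2
  have hdenpos : 0 < (Δ:ℝ)^2 * μ * n ^ ((5:ℝ)/2) := by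
    rw [hrpow]; positivity
  have h128 : (128:ℝ) ≤ 49 * ((Δ:ℝ) * μ) := by
    have hmusqrt : 64/49 < μ := by nlinarith [hmu2, hmu0, hΔ2r]
    nlinarith [hmu0, hΔ2r, hmusqrt]
  by_cases hcase : 128 * n * δ ≤ 49 * M^2
  · -- flat case: φ u₁ is large
    refine ⟨u₁, hu₁, ?_⟩
    have hpath2 : (M - φ u₁)^2 ≤ (49/64)*M^2 := by nlinarith [hpath, hcase]
    have h8 : M/8 ≤ φ u₁ := by nlinarith [hpath2, hMpos, hpos u₁, hwmax u₁]
    rw [div_le_iff₀ hdenpos, hrpow]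
    have hΔsq : (4:ℝ) ≤ (Δ:ℝ)^2 := by nlinarith [hΔ2r]
    have hnsq : (4:ℝ) ≤ n^2 := by nlinarith [hn2]
    have h16 : (16:ℝ) ≤ (Δ:ℝ)^2 * μ * n^2 := by
      calc (16:ℝ) = 4 * 1 * 4 := by norm_num
        _ ≤ (Δ:ℝ)^2 * μ * n^2 :=
          mul_le_mul (mul_le_mul hΔsq hmu1 zero_le_one (by positivity)) hnsq (by norm_num)
            (by positivity)
    have e1 : (16:ℝ) ≤ ((Δ:ℝ)^2 * μ * n^2) * (s*M) :=
      le_trans (by linarith) (mul_le_mul h16 hsM zero_le_one (by linarith))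
    have e2 : (M/8) * ((Δ:ℝ)^2 * μ * n^2 * s) ≤ φ u₁ * ((Δ:ℝ)^2 * μ * n^2 * s) := by
      apply mul_le_mul_of_nonneg_right h8
      positivity
    nlinarith [e1, e2]
  · -- steep case: the maximal low-degree vertex is large
    push_neg at hcase
    set S : Finset V := Finset.univ.filter (fun v => H.degree v < Δ) with hS_def
    clear_value S
    have hSne : S.Nonempty := ⟨u₁, by
      rw [hS_def, Finset.mem_filter]
      exact ⟨Finset.mem_univ _, hu₁⟩⟩
    obtain ⟨u, huS, humax⟩ := Finset.exists_max_image S φ hSne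
    have huld : H.degree u < Δ := by
      rw [hS_def, Finset.mem_filter] at huS
      exact huS.2
    refine ⟨u, huld, ?_⟩
    have hupos : 0 < φ u := hpos u
    -- δ * ∑ φ ≤ Δ * n * φ u
    have hB1 : δ * ∑ v, φ v ≤ (Δ:ℝ) * n * φ u := by
      rw [← hkey]
      have hzero : ∀ v ∈ Finset.univ, v ∉ S → ((Δ:ℝ) - (H.degree v : ℝ)) * φ v = 0 := by
        intro v _ hv
        rw [hS_def, Finset.mem_filter] at hv
        push_neg at hv
        have : H.degree v = Δ := le_antisymm (hdeg v) (hv (Finset.mem_univ v))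
        rw [this]; ring
      rw [← Finset.sum_subset (Finset.subset_univ S) hzero]
      calc ∑ v ∈ S, ((Δ:ℝ) - (H.degree v : ℝ)) * φ v ≤ ∑ _v ∈ S, (Δ:ℝ) * φ u := by
            apply Finset.sum_le_sum
            intro v hv
            have h1 : (0:ℝ) ≤ (H.degree v : ℝ) := by positivity
            have h2 : (H.degree v:ℝ) ≤ (Δ:ℝ) := by exact_mod_cast hdeg v
            have h3 : φ v ≤ φ u := humax v hv
            nlinarith [hpos v]
        _ = (S.card : ℝ) * ((Δ:ℝ) * φ u) := by rw [Finset.sum_const, nsmul_eq_mul]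
        _ ≤ n * ((Δ:ℝ) * φ u) :=
            mul_le_mul_of_nonneg_right (hcardn S) (by positivity)
        _ = (Δ:ℝ) * n * φ u := by ring
    have hB2 : δ ≤ M * ((Δ:ℝ) * n * φ u) := by
      calc δ = δ * 1 := by ring
        _ ≤ δ * (M * ∑ v, φ v) := by nlinarith [hδpos, hMsum]
        _ = M * (δ * ∑ v, φ v) := by ring
        _ ≤ M * ((Δ:ℝ) * n * φ u) := by nlinarith [hB1, hMpos]
    -- 49 M < 128 Δ n² φ u
    have hB3 : 49 * M ≤ 128 * (Δ:ℝ) * n^2 * φ u := by nlinarith [hcase, hB2, hMpos, hn0]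
    clear hB1 hB2 hkey hMsum hcase hSne humax huS
    rw [div_le_iff₀ hdenpos, hrpow]
    have e1 : (128:ℝ) ≤ (49 * ((Δ:ℝ)*μ)) * (s*M) :=
      le_trans (by linarith) (mul_le_mul h128 hsM zero_le_one (by linarith))
    have e2 : (49*M) * ((Δ:ℝ)*μ*s) ≤ (128 * (Δ:ℝ) * n^2 * φ u) * ((Δ:ℝ)*μ*s) := by
      apply mul_le_mul_of_nonneg_right hB3
      positivity
    nlinarith [e1, e2]
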